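/- Suppose Var(X^{⊥W₁}) > 0, Var(Y) > 0, Cov(X, γ_med'W₁) ≠ 0, R²_long ∈ (R²_med, 1], and γ_med = C_med·π₁ for some C_med ∈ ℝ (proportional coefficients). Then Cov(X, γ_med'W₁)² = Var(π₁'W₁)·Var(γ_med'W₁), and the quadratic equation f₀(B) + f₁(B, R²_long) = 0 (i.e., δ = 1) in B has exactly two real roots: B₁ = (R²_long − R²_med)Var(Y)·Var(π₁'W₁) / ( Var(X^{⊥W₁})·Cov(X, γ_med'W₁) ) and B₂ = −Var(γ_med'W₁)/Cov(X, γ_med'W₁), and these roots are distinct. -/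

import Mathlib

open scoped RealInnerProductSpace

/-- Gram (covariance) matrix of a finite family of demeaned square-integrable
random variables, modeled as vectors in a real inner product space where
`⟪A, B⟫` is `Cov(A, B)`. -/
noncomputable def gram {V : Type*} [NormedAddCommGroup V] [InnerProductSpace ℝ V]
    {ι : Type*} [Fintype ι] (f : ι → V) : Matrix ι ι ℝ :=
  Matrix.of fun i j => ⟪f i, f j⟫

/-- `π₁ = Var(W₁)⁻¹ Cov(W₁, X)`: coefficient vector of the linear projection of
`X` on `W₁`. -/
noncomputable def pi1 {V : Type*} [NormedAddCommGroup V] [InnerProductSpace ℝ V]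
    {d : ℕ} (W₁ : Fin d → V) (X : V) : Fin d → ℝ :=
  (gram W₁)⁻¹.mulVec fun i => ⟪W₁ i, X⟫

/-- `X^{⊥W₁} = X − π₁'W₁`. -/
noncomputable def perpW1 {V : Type*} [NormedAddCommGroup V] [InnerProductSpace ℝ V]
    {d : ℕ} (W₁ : Fin d → V) (X : V) : V :=
  X - ∑ i, pi1 W₁ X i • W₁ i


/-- `f₀(B)` as in Oster's cubic. -/
noncomputable def f0 (vXp vGam cXg vPi B : ℝ) : ℝ :=
  -B * vXp * (vGam + 2 * B * cXg + B ^ 2 * vPi)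

/-- `f₁(B, R²_long)` as in Oster's cubic. -/
noncomputable def f1 (R2l R2m vY cXg vPi vXp B : ℝ) : ℝ :=
  (R2l - R2m) * vY * cXg + B * (R2l - R2m) * vY * vPi
    + B ^ 2 * vXp * cXg + B ^ 3 * vXp * vPi

/-! With `δ = 1` the cubic terms of `f₀` and `f₁` cancel, and once Cauchy–Schwarz holds with
equality, `Cov(X, γ'W₁)² = Var(π₁'W₁)·Var(γ'W₁)`, the discriminant of the remaining quadratic is
the perfect square `((R²_long − R²_med)·Var(Y)·Var(π₁'W₁) + Var(X^{⊥W₁})·Var(γ'W₁))²`, so the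
quadratic formula gives the two roots, distinct because this square root is positive.
Proportionality supplies the equality case: `X − π₁'W₁` is orthogonal to every `W₁ i`, hence
`Cov(X, π₁'W₁) = Var(π₁'W₁)`, and `γ'W₁ = C·π₁'W₁`. -/

section Projection

variable {V : Type*} [NormedAddCommGroup V] [InnerProductSpace ℝ V] {d : ℕ} {W₁ : Fin d → V}

theorem gram_mulVec_pi1 (hW₁ : IsUnit (gram W₁).det) (X : V) :
    (gram W₁).mulVec (pi1 W₁ X) = fun i => ⟪W₁ i, X⟫ := by
  rw [pi1, Matrix.mulVec_mulVec, Matrix.mul_nonsing_inv _ hW₁, Matrix.one_mulVec]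

theorem inner_perpW1_left_eq_zero (hW₁ : IsUnit (gram W₁).det) (X : V) (i : Fin d) :
    ⟪perpW1 W₁ X, W₁ i⟫ = 0 := by
  have normal_eq : ∑ j, ⟪W₁ i, W₁ j⟫ * pi1 W₁ X j = ⟪W₁ i, X⟫ :=
    congrFun (gram_mulVec_pi1 hW₁ X) i
  rw [perpW1, inner_sub_left, sum_inner, real_inner_comm, ← normal_eq, sub_eq_zero]
  exact Finset.sum_congr rfl fun j _ => by rw [real_inner_smul_left, real_inner_comm, mul_comm]

theorem inner_sum_pi1_eq_inner_self (hW₁ : IsUnit (gram W₁).det) (X : V) :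
    ⟪X, ∑ i, pi1 W₁ X i • W₁ i⟫ = ⟪∑ i, pi1 W₁ X i • W₁ i, ∑ i, pi1 W₁ X i • W₁ i⟫ := by
  have perp_orthogonal : ⟪perpW1 W₁ X, ∑ i, pi1 W₁ X i • W₁ i⟫ = 0 := by
    simp [inner_sum, real_inner_smul_right, inner_perpW1_left_eq_zero hW₁]
  rwa [perpW1, inner_sub_left, sub_eq_zero] at perp_orthogonal

end Projection

section DeltaOne

variable {R2l R2m vY cXg vPi vXp vGam : ℝ}

theorem f0_add_f1_eq_quadratic (B : ℝ) :
    f0 vXp vGam cXg vPi B + f1 R2l R2m vY cXg vPi vXp B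
      = -(vXp * cXg) * (B * B) + ((R2l - R2m) * vY * vPi - vXp * vGam) * B
        + (R2l - R2m) * vY * cXg := by
  simp only [f0, f1]
  ring

theorem discrim_delta_one (K : ℝ) (hcs : cXg ^ 2 = vPi * vGam) :
    discrim (-(vXp * cXg)) (K * vPi - vXp * vGam) (K * cXg)
      = -(K * vPi + vXp * vGam) * -(K * vPi + vXp * vGam) := by
  rw [discrim]
  linear_combination (4 * K * vXp) * hcs

theorem f0_add_f1_eq_zero_iff (hvXp : vXp ≠ 0) (hcXg : cXg ≠ 0)
    (hcs : cXg ^ 2 = vPi * vGam) (B : ℝ) :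
    f0 vXp vGam cXg vPi B + f1 R2l R2m vY cXg vPi vXp B = 0
      ↔ B = (R2l - R2m) * vY * vPi / (vXp * cXg) ∨ B = -vGam / cXg := by
  have ha : -(vXp * cXg) ≠ 0 := neg_ne_zero.mpr (mul_ne_zero hvXp hcXg)
  rw [f0_add_f1_eq_quadratic, quadratic_eq_zero_iff ha (discrim_delta_one _ hcs)]
  congr! 2 <;> field_simp <;> ring

theorem delta_one_roots_ne (hR : R2m < R2l) (hvY : 0 < vY) (hvXp : 0 < vXp) (hvPi : 0 ≤ vPi)
    (hvGam : 0 < vGam) (hcXg : cXg ≠ 0) :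
    (R2l - R2m) * vY * vPi / (vXp * cXg) ≠ -vGam / cXg := by
  have root_sum_pos : 0 < (R2l - R2m) * vY * vPi + vXp * vGam :=
    add_pos_of_nonneg_of_pos (mul_nonneg (mul_pos (sub_pos.mpr hR) hvY).le hvPi)
      (mul_pos hvXp hvGam)
  rw [Ne, div_eq_div_iff (mul_ne_zero hvXp.ne' hcXg) hcXg]
  intro h
  exact root_sum_pos.ne' (mul_right_cancel₀ hcXg (by linear_combination h))

end DeltaOne

theorem delta_one_quadratic_roots_general
    {V : Type*} [NormedAddCommGroup V] [InnerProductSpace ℝ V] {d : ℕ}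
    (Y X : V) (W₁ : Fin d → V)
    (hpdW1 : (gram W₁).PosDef)
    (hvXp : 0 < ⟪perpW1 W₁ X, perpW1 W₁ X⟫)
    (hvarY : 0 < ⟪Y, Y⟫)
    (βmed : ℝ) (γmed : Fin d → ℝ)
    (hcXg : ⟪X, ∑ i, γmed i • W₁ i⟫ ≠ 0)
    (Cmed : ℝ) (hprop : γmed = Cmed • pi1 W₁ X)
    (R2l : ℝ)
    (hR2l : R2l ∈ Set.Ioc
      (⟪βmed • X + ∑ i, γmed i • W₁ i, βmed • X + ∑ i, γmed i • W₁ i⟫ / ⟪Y, Y⟫) 1) :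
    ⟪X, ∑ i, γmed i • W₁ i⟫ ^ 2
      = ⟪∑ i, pi1 W₁ X i • W₁ i, ∑ i, pi1 W₁ X i • W₁ i⟫
        * ⟪∑ i, γmed i • W₁ i, ∑ i, γmed i • W₁ i⟫
    ∧ (∀ B : ℝ,
        f0 ⟪perpW1 W₁ X, perpW1 W₁ X⟫
          ⟪∑ i, γmed i • W₁ i, ∑ i, γmed i • W₁ i⟫
          ⟪X, ∑ i, γmed i • W₁ i⟫
          ⟪∑ i, pi1 W₁ X i • W₁ i, ∑ i, pi1 W₁ X i • W₁ i⟫ B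
        + f1 R2l
          (⟪βmed • X + ∑ i, γmed i • W₁ i, βmed • X + ∑ i, γmed i • W₁ i⟫ / ⟪Y, Y⟫)
          ⟪Y, Y⟫
          ⟪X, ∑ i, γmed i • W₁ i⟫
          ⟪∑ i, pi1 W₁ X i • W₁ i, ∑ i, pi1 W₁ X i • W₁ i⟫
          ⟪perpW1 W₁ X, perpW1 W₁ X⟫ B = 0
      ↔ B = (R2l
            - ⟪βmed • X + ∑ i, γmed i • W₁ i, βmed • X + ∑ i, γmed i • W₁ i⟫ / ⟪Y, Y⟫)
            * ⟪Y, Y⟫ * ⟪∑ i, pi1 W₁ X i • W₁ i, ∑ i, pi1 W₁ X i • W₁ i⟫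
            / (⟪perpW1 W₁ X, perpW1 W₁ X⟫ * ⟪X, ∑ i, γmed i • W₁ i⟫)
        ∨ B = -⟪∑ i, γmed i • W₁ i, ∑ i, γmed i • W₁ i⟫ / ⟪X, ∑ i, γmed i • W₁ i⟫)
    ∧ (R2l - ⟪βmed • X + ∑ i, γmed i • W₁ i, βmed • X + ∑ i, γmed i • W₁ i⟫ / ⟪Y, Y⟫)
          * ⟪Y, Y⟫ * ⟪∑ i, pi1 W₁ X i • W₁ i, ∑ i, pi1 W₁ X i • W₁ i⟫
          / (⟪perpW1 W₁ X, perpW1 W₁ X⟫ * ⟪X, ∑ i, γmed i • W₁ i⟫)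
        ≠ -⟪∑ i, γmed i • W₁ i, ∑ i, γmed i • W₁ i⟫ / ⟪X, ∑ i, γmed i • W₁ i⟫ := by
  set P := ∑ i, pi1 W₁ X i • W₁ i
  set G := ∑ i, γmed i • W₁ i
  have hW₁ : IsUnit (gram W₁).det := isUnit_iff_ne_zero.mpr hpdW1.det_pos.ne'
  have hG : G = Cmed • P := by
    simp only [G, P, hprop, Finset.smul_sum, Pi.smul_apply, smul_eq_mul, smul_smul]
  have hcs : ⟪X, G⟫ ^ 2 = ⟪P, P⟫ * ⟪G, G⟫ := by
    rw [hG, real_inner_smul_right, real_inner_smul_left, real_inner_smul_right,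
      inner_sum_pi1_eq_inner_self hW₁]
    ring
  have hvGam : 0 < ⟪G, G⟫ :=
    real_inner_self_pos.mpr fun hG0 => hcXg (by rw [hG0, inner_zero_right])
  exact ⟨hcs, f0_add_f1_eq_zero_iff hvXp.ne' hcXg hcs,
    delta_one_roots_ne hR2l.1 hvarY hvXp real_inner_self_nonneg hvGam hcXg⟩

/-- Under proportional coefficients (`γ_med = C_med·π₁`),
`Cov(X,γ_med'W₁)² = Var(π₁'W₁)·Var(γ_med'W₁)`, and the `δ = 1` equation
`f₀(B) + f₁(B, R²_long) = 0` has exactly the two distinct roots `B₁` and `B₂`. -/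
theorem delta_one_quadratic_roots
    {V : Type*} [NormedAddCommGroup V] [InnerProductSpace ℝ V] {d : ℕ}
    (Y X : V) (W₁ : Fin d → V)
    (hpdW1 : (gram W₁).PosDef)
    (hvXp : 0 < ⟪perpW1 W₁ X, perpW1 W₁ X⟫)
    (hvarY : 0 < ⟪Y, Y⟫)
    (βmed : ℝ) (γmed : Fin d → ℝ) (Vres : V)
    (hmed : Y = βmed • X + (∑ i, γmed i • W₁ i) + Vres)
    (hVX : ⟪Vres, X⟫ = 0) (hVW1 : ∀ i, ⟪Vres, W₁ i⟫ = 0)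
    (hcXg : ⟪X, ∑ i, γmed i • W₁ i⟫ ≠ 0)
    (Cmed : ℝ) (hprop : γmed = Cmed • pi1 W₁ X)
    (R2l : ℝ)
    (hR2l : R2l ∈ Set.Ioc
      (⟪βmed • X + ∑ i, γmed i • W₁ i, βmed • X + ∑ i, γmed i • W₁ i⟫ / ⟪Y, Y⟫) 1) :
    ⟪X, ∑ i, γmed i • W₁ i⟫ ^ 2
      = ⟪∑ i, pi1 W₁ X i • W₁ i, ∑ i, pi1 W₁ X i • W₁ i⟫
        * ⟪∑ i, γmed i • W₁ i, ∑ i, γmed i • W₁ i⟫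
    ∧ (∀ B : ℝ,
        f0 ⟪perpW1 W₁ X, perpW1 W₁ X⟫
          ⟪∑ i, γmed i • W₁ i, ∑ i, γmed i • W₁ i⟫
          ⟪X, ∑ i, γmed i • W₁ i⟫
          ⟪∑ i, pi1 W₁ X i • W₁ i, ∑ i, pi1 W₁ X i • W₁ i⟫ B
        + f1 R2l
          (⟪βmed • X + ∑ i, γmed i • W₁ i, βmed • X + ∑ i, γmed i • W₁ i⟫ / ⟪Y, Y⟫)
          ⟪Y, Y⟫
          ⟪X, ∑ i, γmed i • W₁ i⟫
          ⟪∑ i, pi1 W₁ X i • W₁ i, ∑ i, pi1 W₁ X i • W₁ i⟫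
          ⟪perpW1 W₁ X, perpW1 W₁ X⟫ B = 0
      ↔ B = (R2l
            - ⟪βmed • X + ∑ i, γmed i • W₁ i, βmed • X + ∑ i, γmed i • W₁ i⟫ / ⟪Y, Y⟫)
            * ⟪Y, Y⟫ * ⟪∑ i, pi1 W₁ X i • W₁ i, ∑ i, pi1 W₁ X i • W₁ i⟫
            / (⟪perpW1 W₁ X, perpW1 W₁ X⟫ * ⟪X, ∑ i, γmed i • W₁ i⟫)
        ∨ B = -⟪∑ i, γmed i • W₁ i, ∑ i, γmed i • W₁ i⟫ / ⟪X, ∑ i, γmed i • W₁ i⟫)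
    ∧ (R2l - ⟪βmed • X + ∑ i, γmed i • W₁ i, βmed • X + ∑ i, γmed i • W₁ i⟫ / ⟪Y, Y⟫)
          * ⟪Y, Y⟫ * ⟪∑ i, pi1 W₁ X i • W₁ i, ∑ i, pi1 W₁ X i • W₁ i⟫
          / (⟪perpW1 W₁ X, perpW1 W₁ X⟫ * ⟪X, ∑ i, γmed i • W₁ i⟫)
        ≠ -⟪∑ i, γmed i • W₁ i, ∑ i, γmed i • W₁ i⟫ / ⟪X, ∑ i, γmed i • W₁ i⟫ :=
  delta_one_quadratic_roots_general Y X W₁ hpdW1 hvXp hvarY βmed γmed hcXg Cmed hprop R2l hR2l
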